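/- arXiv:1303.2902 — 3 statements merged into one kernel-verified Lean document; each statement's English description precedes it below -/
import Mathlib

section
/- If B : ℝ → ℝ is convex and twice differentiable, then for any ρ^{k-1}, ρ^k ∈ ℝ and Δt > 0, B'(ρ^k)·(ρ^k − ρ^{k-1}) ≥ B(ρ^k) − B(ρ^{k-1}). Consequently, for a sequence satisfying the implicit continuity scheme multiplied by B'(ρ_i^k), the discrete quantity Σ_i B(ρ_i^m)Δx is bounded by Σ_i B(ρ_i^0)Δx minus the accumulated flux term. -/
open Finset

/-! Renormalizing the scheme: multiplying the discrete continuity equation by `B'(ρᵢᵏ)`, the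
tangent inequality of the convex `B` at `ρᵢᵏ` bounds the time increment of `B(ρᵢᵏ)`. Summing by
parts moves the flux difference onto `B'(ρᵏ)`, and on each interior face the upwind choice of the
density makes `(B'(ρ_{j}) - B'(ρ_{j-1})) F_j ≤ (b(ρ_j) - b(ρ_{j-1})) u_j`, again by the tangent
inequality, now at the upwind cell. Summing by parts back gives the one-step bound, and the
claim follows by telescoping in time. -/

lemma ConvexOn.sub_le_deriv_mul_sub {S : Set ℝ} {f : ℝ → ℝ} (hf : ConvexOn ℝ S f) {x y : ℝ}
    (hx : x ∈ S) (hy : y ∈ S) (hfy : DifferentiableAt ℝ f y) :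
    f y - f x ≤ deriv f y * (y - x) := by
  rcases lt_trichotomy x y with hxy | rfl | hyx
  · have h := hf.slope_le_deriv hx hy hxy hfy
    rw [slope_def_field, div_le_iff₀ (sub_pos.2 hxy)] at h
    linarith
  · simp
  · have h := hf.deriv_le_slope hy hx hyx hfy
    rw [slope_def_field, le_div_iff₀ (sub_pos.2 hyx)] at h
    linarith

lemma Finset.sum_range_mul_sub_eq_neg_sum_sub_mul {R : Type*} [CommRing R] (a g : ℕ → R) (n : ℕ)
    (h₀ : g 0 = 0) (hₙ : g (n + 1) = 0) :
    ∑ i ∈ range (n + 1), a i * (g (i + 1) - g i)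
      = -∑ i ∈ range n, (a (i + 1) - a i) * g (i + 1) := by
  simpa only [sum_range_sub, h₀, sub_zero, smul_eq_mul, add_tsub_cancel_right, hₙ, mul_zero,
    zero_sub] using sum_range_by_parts a (fun i => g (i + 1) - g i) (n := n + 1)

lemma le_sub_sum_Icc_of_le_sub {α : Type*} [AddCommGroup α] [PartialOrder α]
    [IsOrderedAddMonoid α] {E D : ℕ → α} (h : ∀ k, E (k + 1) ≤ E k - D (k + 1)) (m : ℕ) :
    E m ≤ E 0 - ∑ k ∈ Icc 1 m, D k := by
  induction m with
  | zero => simp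
  | succ m ih =>
    rw [sum_Icc_succ_top (Nat.le_add_left 1 m), sub_add_eq_sub_sub]
    exact (h m).trans (sub_le_sub_right ih _)

/-- The function `b(z) = z B'(z) - B(z)` of the renormalized continuity equation
`∂ₜB(ρ) + ∂ₓ(B(ρ)u) + b(ρ)∂ₓu = 0`. -/
noncomputable def renormCorrection (B : ℝ → ℝ) (z : ℝ) : ℝ := z * deriv B z - B z

section Upwind

variable {S : Set ℝ} {B : ℝ → ℝ}

lemma deriv_sub_mul_upwindFlux_le (hB : ConvexOn ℝ S B) {a c : ℝ} (ha : a ∈ S) (hc : c ∈ S)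
    (hBa : DifferentiableAt ℝ B a) (hBc : DifferentiableAt ℝ B c) (v : ℝ) :
    (deriv B c - deriv B a) * (a * max v 0 + c * min v 0)
      ≤ (renormCorrection B c - renormCorrection B a) * v := by
  have htan_c := hB.sub_le_deriv_mul_sub ha hc hBc
  have htan_a := hB.sub_le_deriv_mul_sub hc ha hBa
  -- The gap is `v⁺ · (tangent gap at c) + v⁻ · (tangent gap at a)`, both terms nonnegative.
  have hpos := mul_nonneg (le_max_right v 0) (sub_nonneg.2 htan_c)
  have hneg := mul_nonneg_of_nonpos_of_nonpos (min_le_right v 0)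
    (by linarith : deriv B a * (c - a) - (B c - B a) ≤ 0)
  have hv : max v 0 + min v 0 = v := by rw [max_add_min, add_zero]
  unfold renormCorrection
  linear_combination hpos + hneg + (c * deriv B c - B c - (a * deriv B a - B a)) * hv

variable (hB : ConvexOn ℝ Set.univ B) (hBdiff : ∀ x, DifferentiableAt ℝ B x)
include hB hBdiff

lemma sum_renormCorrection_mul_sub_le_of_upwind {N : ℕ} (hN : 1 ≤ N) {ρ u F : ℕ → ℝ}
    (hu : u 0 = 0 ∧ u N = 0) (hF : F 0 = 0 ∧ F N = 0)
    (hFdef : ∀ j, 1 ≤ j → j ≤ N - 1 → F j = ρ (j - 1) * max (u j) 0 + ρ j * min (u j) 0) :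
    ∑ i ∈ range N, renormCorrection B (ρ i) * (u (i + 1) - u i)
      ≤ ∑ i ∈ range N, deriv B (ρ i) * (F (i + 1) - F i) := by
  obtain ⟨n, rfl⟩ : ∃ n, N = n + 1 := ⟨N - 1, by omega⟩
  rw [sum_range_mul_sub_eq_neg_sum_sub_mul _ _ n hu.1 hu.2,
    sum_range_mul_sub_eq_neg_sum_sub_mul _ _ n hF.1 hF.2, neg_le_neg_iff]
  refine sum_le_sum fun i hi => ?_
  rw [hFdef (i + 1) (by omega) (by simp at hi; omega), Nat.add_sub_cancel]
  exact deriv_sub_mul_upwindFlux_le hB trivial trivial (hBdiff _) (hBdiff _) _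

lemma sum_le_sum_sub_of_upwind_step {N : ℕ} (hN : 1 ≤ N) {Δt Δx : ℝ} (hΔt : 0 < Δt)
    (hΔx : 0 < Δx) {ρ₀ ρ u F : ℕ → ℝ} (hu : u 0 = 0 ∧ u N = 0) (hF : F 0 = 0 ∧ F N = 0)
    (hFdef : ∀ j, 1 ≤ j → j ≤ N - 1 → F j = ρ (j - 1) * max (u j) 0 + ρ j * min (u j) 0)
    (hscheme : ∀ i < N, (ρ i - ρ₀ i) / Δt + (F (i + 1) - F i) / Δx = 0) :
    Δx * ∑ i ∈ range N, B (ρ i)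
      ≤ Δx * ∑ i ∈ range N, B (ρ₀ i)
        - Δt * Δx * ∑ i ∈ range N, renormCorrection B (ρ i) * ((u (i + 1) - u i) / Δx) := by
  have hincr : ∀ i ∈ range N, Δx * (ρ i - ρ₀ i) = -(Δt * (F (i + 1) - F i)) := by
    intro i hi
    have h := hscheme i (mem_range.1 hi)
    field_simp at h
    linarith
  have htangent : Δx * ∑ i ∈ range N, (B (ρ i) - B (ρ₀ i))
      ≤ -(Δt * ∑ i ∈ range N, deriv B (ρ i) * (F (i + 1) - F i)) :=
    calc Δx * ∑ i ∈ range N, (B (ρ i) - B (ρ₀ i))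
        ≤ Δx * ∑ i ∈ range N, deriv B (ρ i) * (ρ i - ρ₀ i) :=
          mul_le_mul_of_nonneg_left (sum_le_sum fun i _ =>
            hB.sub_le_deriv_mul_sub trivial trivial (hBdiff _)) hΔx.le
      _ = -(Δt * ∑ i ∈ range N, deriv B (ρ i) * (F (i + 1) - F i)) := by
          rw [mul_sum, mul_sum, ← sum_neg_distrib]
          refine sum_congr rfl fun i hi => ?_
          rw [mul_left_comm, hincr i hi]
          ring
  have hdiss := mul_le_mul_of_nonneg_left
    (sum_renormCorrection_mul_sub_le_of_upwind hB hBdiff hN hu hF hFdef) hΔt.le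
  have hflux : Δt * Δx * ∑ i ∈ range N, renormCorrection B (ρ i) * ((u (i + 1) - u i) / Δx)
      = Δt * ∑ i ∈ range N, renormCorrection B (ρ i) * (u (i + 1) - u i) := by
    rw [mul_assoc, mul_sum]
    congr 1
    refine sum_congr rfl fun i _ => ?_
    field_simp
  rw [sum_sub_distrib, mul_sub] at htangent
  linarith

end Upwind

theorem convexity_renormalized_scheme_bound_general (B : ℝ → ℝ)
    (hconv : ConvexOn ℝ Set.univ B)
    (hdiff : ∀ x : ℝ, DifferentiableAt ℝ B x) :
    (∀ ρ0 ρ1 : ℝ, B ρ1 - B ρ0 ≤ deriv B ρ1 * (ρ1 - ρ0)) ∧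
    (∀ (N M : ℕ), 1 ≤ N → ∀ (Δt Δx : ℝ), 0 < Δt → 0 < Δx →
      ∀ (ρ : ℕ → ℕ → ℝ) (u : ℕ → ℕ → ℝ) (F : ℕ → ℕ → ℝ),
      (∀ k i, 0 < ρ k i) →
      (∀ k, u k 0 = 0 ∧ u k N = 0) →
      (∀ k, F k 0 = 0 ∧ F k N = 0) →
      (∀ k j, 1 ≤ j → j ≤ N - 1 →
        F k j = ρ k (j - 1) * max (u k j) 0 + ρ k j * min (u k j) 0) →
      (∀ k, 1 ≤ k → ∀ i < N,
        (ρ k i - ρ (k - 1) i) / Δt + (F k (i + 1) - F k i) / Δx = 0) →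
      ∀ m ≤ M,
        Δx * ∑ i ∈ range N, B (ρ m i)
          ≤ Δx * ∑ i ∈ range N, B (ρ 0 i)
            - Δt * Δx * ∑ k ∈ Finset.Icc 1 m, ∑ i ∈ range N,
                (ρ k i * deriv B (ρ k i) - B (ρ k i))
                  * ((u k (i + 1) - u k i) / Δx)) := by
  refine ⟨fun _ _ => hconv.sub_le_deriv_mul_sub trivial trivial (hdiff _), ?_⟩
  intro N M hN Δt Δx hΔt hΔx ρ u F _ hu hF hFdef hscheme m _
  rw [mul_sum (Icc 1 m)]
  refine le_sub_sum_Icc_of_le_sub (E := fun k => Δx * ∑ i ∈ range N, B (ρ k i)) (fun k => ?_) m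
  refine sum_le_sum_sub_of_upwind_step hconv hdiff hN hΔt hΔx (hu (k + 1)) (hF (k + 1))
    (hFdef (k + 1)) fun i hi => ?_
  simpa using hscheme (k + 1) k.succ_pos i hi

/-- Convexity inequality `B'(ρᵏ)(ρᵏ-ρᵏ⁻¹) ≥ B(ρᵏ)-B(ρᵏ⁻¹)` for convex twice
differentiable `B`, and its consequence for the implicit upwind continuity scheme:
the discrete quantity `Σᵢ B(ρᵢᵐ)Δx` is bounded by `Σᵢ B(ρᵢ⁰)Δx` minus the accumulated
flux term `Δt Δx Σ_{k≤m} Σᵢ b(ρᵢᵏ)·∂ᵢuᵏ`, where `b(z) = zB'(z)-B(z)`.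
Here `u k j` is the face velocity `u_{j-1/2}` at time level `k`, with zero velocity
(hence zero flux `F`) at the boundary faces. -/
theorem convexity_renormalized_scheme_bound (B : ℝ → ℝ)
    (hconv : ConvexOn ℝ Set.univ B)
    (hdiff : ∀ x : ℝ, DifferentiableAt ℝ B x)
    (hdiff2 : ∀ x : ℝ, DifferentiableAt ℝ (deriv B) x) :
    (∀ ρ0 ρ1 : ℝ, B ρ1 - B ρ0 ≤ deriv B ρ1 * (ρ1 - ρ0)) ∧
    (∀ (N M : ℕ), 1 ≤ N → ∀ (Δt Δx : ℝ), 0 < Δt → 0 < Δx →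
      ∀ (ρ : ℕ → ℕ → ℝ) (u : ℕ → ℕ → ℝ) (F : ℕ → ℕ → ℝ),
      (∀ k i, 0 < ρ k i) →
      (∀ k, u k 0 = 0 ∧ u k N = 0) →
      (∀ k, F k 0 = 0 ∧ F k N = 0) →
      (∀ k j, 1 ≤ j → j ≤ N - 1 →
        F k j = ρ k (j - 1) * max (u k j) 0 + ρ k j * min (u k j) 0) →
      (∀ k, 1 ≤ k → ∀ i < N,
        (ρ k i - ρ (k - 1) i) / Δt + (F k (i + 1) - F k i) / Δx = 0) →
      ∀ m ≤ M,
        Δx * ∑ i ∈ range N, B (ρ m i)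
          ≤ Δx * ∑ i ∈ range N, B (ρ 0 i)
            - Δt * Δx * ∑ k ∈ Finset.Icc 1 m, ∑ i ∈ range N,
                (ρ k i * deriv B (ρ k i) - B (ρ k i))
                  * ((u k (i + 1) - u k i) / Δx)) :=
  convexity_renormalized_scheme_bound_general B hconv hdiff
end

section
/- Let ρ_i, ρ_{i+1} > 0, let û_i, û_{i+1}, u_{i+1/2} ∈ ℝ, and set Up(ρûu)_{i+1/2} = (ρ_i û_i)u_{i+1/2}^+ + (ρ_{i+1} û_{i+1})u_{i+1/2}^- and Up(ρu)_{i+1/2} = ρ_i u_{i+1/2}^+ + ρ_{i+1} u_{i+1/2}^-. Then Up(ρûu)_{i+1/2}·(û_{i+1} − û_i)/Δx = Up(ρu)_{i+1/2}·(û_{i+1}² − û_i²)/(2Δx) − (Δx/2)·|Up(ρu)_{i+1/2}|·((û_{i+1} − û_i)/Δx)². -/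
/-! The upwind flux `Up(ρûu)` is the centred flux `Up(ρu)·(ûᵢ + ûᵢ₊₁)/2` minus the numerical
diffusion `|Up(ρu)|·(ûᵢ₊₁ - ûᵢ)/2`: the density upwinded with `u⁺ ≥ 0` and `u⁻ ≤ 0` and positive
weights has the sign of `u`, so its absolute value is `ρᵢu⁺ - ρᵢ₊₁u⁻`. Testing against the
difference quotient of `û` turns the centred part into the difference quotient of `û²/2`. -/

section UpwindFlux

variable {α : Type*} [Field α] [LinearOrder α] [IsStrictOrderedRing α] {a b : α}

theorem abs_mul_max_add_mul_min (ha : 0 ≤ a) (hb : 0 ≤ b) (u : α) :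
    |a * max u 0 + b * min u 0| = a * max u 0 - b * min u 0 := by
  rcases le_total u 0 with hu | hu
  · rw [max_eq_right hu, min_eq_left hu,
      abs_of_nonpos (by simpa using mul_nonpos_of_nonneg_of_nonpos hb hu)]
    ring
  · rw [max_eq_left hu, min_eq_right hu, abs_of_nonneg (by simpa using mul_nonneg ha hu)]
    ring

theorem upwind_flux_eq_centred_sub_diffusion (ha : 0 ≤ a) (hb : 0 ≤ b) (v₀ v₁ u : α) :
    a * v₀ * max u 0 + b * v₁ * min u 0
      = (a * max u 0 + b * min u 0) * ((v₀ + v₁) / 2)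
        - |a * max u 0 + b * min u 0| * ((v₁ - v₀) / 2) := by
  rw [abs_mul_max_add_mul_min ha hb]
  ring

end UpwindFlux

/-- Pointwise identity for the upwind momentum convection term tested against the
velocity: with `Up(ρûu) = ρᵢûᵢu⁺ + ρᵢ₊₁ûᵢ₊₁u⁻` and `Up(ρu) = ρᵢu⁺ + ρᵢ₊₁u⁻`,
`Up(ρûu)·(ûᵢ₊₁-ûᵢ)/Δx = Up(ρu)·(ûᵢ₊₁²-ûᵢ²)/(2Δx) - (Δx/2)|Up(ρu)|((ûᵢ₊₁-ûᵢ)/Δx)²`. -/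
theorem upwind_convection_energy_identity (Δx : ℝ) (hΔx : 0 < Δx)
    (ρ0 ρ1 : ℝ) (hρ0 : 0 < ρ0) (hρ1 : 0 < ρ1) (v0 v1 u : ℝ) :
    (ρ0 * v0 * max u 0 + ρ1 * v1 * min u 0) * ((v1 - v0) / Δx)
      = (ρ0 * max u 0 + ρ1 * min u 0) * ((v1 ^ 2 - v0 ^ 2) / (2 * Δx))
        - (Δx / 2) * |ρ0 * max u 0 + ρ1 * min u 0| * ((v1 - v0) / Δx) ^ 2 := by
  rw [upwind_flux_eq_centred_sub_diffusion hρ0.le hρ1.le]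
  field_simp
  ring
end

section
/- Let the discrete Dirichlet Laplacian on a uniform grid of N interior staggered points be Δ_{i+1/2}w = (w_{i-1/2} − 2w_{i+1/2} + w_{i+3/2})/Δx² with w_{-1/2} = w_{N-1/2} = 0, and let the discrete Neumann Laplacian be Δ_i q = (q_{i-1} − 2q_i + q_{i+1})/Δx² with shadow-cell conditions q_N = q_{N-1}, q_{-1} = q_1 (defined on zero-mean sources). Then the duality Δx·Σ_i v_{i+1/2}·∂_{i+1/2}(Δ_i^{-1}[f]) = −Δx·Σ_i ∂_i(Δ_{i+1/2}^{-1}[v])·f_i holds for all admissible v and zero-mean f, where ∂_{i+1/2}g = (g_{i+1} − g_i)/Δx and ∂_i w = (w_{i+1/2} − w_{i-1/2})/Δx. -/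
/-!
Write `Δ` for the forward difference, so that `f = -Δ²q / Δx²`, `v = -Δ²w / Δx²` and both sides
become `Δx⁻²` times pairings of first and second differences. Abel summation moves one difference
from `q` onto `w`; the boundary terms carry the flux `Δq`, which vanishes at the right end by the
shadow-cell condition and at the left end because the source has zero mean (the sum of `Δ²q`
telescopes to the difference of the two boundary fluxes).
-/

open Finset fwdDiff

section SummationByParts

variable {R : Type*} [Ring R]

theorem fwdDiff_one_fwdDiff_one_apply (q : ℕ → R) (i : ℕ) :
    Δ_[1] (Δ_[1] q) i = q i - 2 * q (i + 1) + q (i + 2) := by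
  simp only [fwdDiff]
  noncomm_ring

theorem sum_range_fwdDiff_one {G : Type*} [AddCommGroup G] (b : ℕ → G) (n : ℕ) :
    ∑ i ∈ range n, Δ_[1] b i = b n - b 0 :=
  sum_range_sub b n

theorem fwdDiff_one_zero_eq_zero_of_sum_eq_zero {G : Type*} [AddCommGroup G] (q : ℕ → G) {n : ℕ}
    (hsum : ∑ i ∈ range n, Δ_[1] (Δ_[1] q) i = 0) (hn : Δ_[1] q n = 0) : Δ_[1] q 0 = 0 := by
  rwa [sum_range_fwdDiff_one, hn, zero_sub, neg_eq_zero] at hsum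

theorem sum_range_mul_fwdDiff_add_sum_range_fwdDiff_mul (a b : ℕ → R) (n : ℕ) :
    ∑ i ∈ range n, a i * Δ_[1] b i + ∑ i ∈ range n, Δ_[1] a i * b (i + 1)
      = a n * b n - a 0 * b 0 := by
  rw [← sum_add_distrib, ← sum_range_sub (fun i ↦ a i * b i)]
  refine sum_congr rfl fun i _ ↦ ?_
  simp only [fwdDiff]
  noncomm_ring

theorem sum_range_mul_fwdDiff_of_eq_zero_of_eq_zero (a b : ℕ → R) {n : ℕ}
    (h0 : b 0 = 0) (hn : b n = 0) :
    ∑ i ∈ range n, a i * Δ_[1] b i = -∑ i ∈ range n, Δ_[1] a i * b (i + 1) := by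
  refine eq_neg_of_add_eq_zero_left ?_
  rw [sum_range_mul_fwdDiff_add_sum_range_fwdDiff_mul, h0, hn, mul_zero, mul_zero, sub_zero]

end SummationByParts

theorem discrete_laplacian_duality_general (N : ℕ) (Δx : ℝ) (hΔx : 0 < Δx)
    (f v q w : ℕ → ℝ)
    (hfmean : ∑ i ∈ range N, f i = 0)
    (hq : ∀ i < N, -((q i - 2 * q (i + 1) + q (i + 2)) / Δx ^ 2) = f i)
    (hqN : q (N + 1) = q N)
    (hw : ∀ j, 1 ≤ j → j ≤ N - 1 →
      -((w (j - 1) - 2 * w j + w (j + 1)) / Δx ^ 2) = v j) :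
    Δx * ∑ i ∈ range N, v (i + 1) * (-((q (i + 2) - q (i + 1)) / Δx))
      = -(Δx * ∑ i ∈ range N, (-((w (i + 1) - w i) / Δx)) * f i) := by
  have hΔx₀ : Δx ≠ 0 := hΔx.ne'
  have hf : ∀ i < N, f i = -(Δ_[1] (Δ_[1] q) i / Δx ^ 2) := fun i hi ↦ by
    rw [fwdDiff_one_fwdDiff_one_apply, hq i hi]
  have hfluxN : Δ_[1] q N = 0 := by rw [fwdDiff, hqN, sub_self]
  have hflux0 : Δ_[1] q 0 = 0 := by
    refine fwdDiff_one_zero_eq_zero_of_sum_eq_zero q ?_ hfluxN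
    have h := sum_congr rfl fun i hi ↦ hf i (mem_range.mp hi)
    rw [hfmean, sum_neg_distrib, ← sum_div] at h
    simpa [hΔx₀] using h
  have hv : ∀ i < N, v (i + 1) * Δ_[1] q (i + 1)
      = -(Δ_[1] (Δ_[1] w) i * Δ_[1] q (i + 1) / Δx ^ 2) := fun i hi ↦ by
    rcases Nat.lt_or_ge (i + 1) N with hi' | hi'
    · rw [← hw (i + 1) (by omega) (by omega), fwdDiff_one_fwdDiff_one_apply, Nat.add_sub_cancel]
      ring
    · obtain rfl : i + 1 = N := by omega
      rw [hfluxN, mul_zero, mul_zero, zero_div, neg_zero]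
  calc Δx * ∑ i ∈ range N, v (i + 1) * (-((q (i + 2) - q (i + 1)) / Δx))
      = -∑ i ∈ range N, v (i + 1) * Δ_[1] q (i + 1) := by
        simp only [mul_sum, ← sum_neg_distrib, fwdDiff]
        field_simp
    _ = (∑ i ∈ range N, Δ_[1] (Δ_[1] w) i * Δ_[1] q (i + 1)) / Δx ^ 2 := by
        rw [sum_div, neg_eq_iff_eq_neg, ← sum_neg_distrib]
        exact sum_congr rfl fun i hi ↦ hv i (mem_range.mp hi)
    _ = -(∑ i ∈ range N, Δ_[1] w i * Δ_[1] (Δ_[1] q) i) / Δx ^ 2 := by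
        rw [sum_range_mul_fwdDiff_of_eq_zero_of_eq_zero _ _ hflux0 hfluxN, neg_neg]
    _ = -(Δx * ∑ i ∈ range N, (-((w (i + 1) - w i) / Δx)) * f i) := by
        rw [mul_sum, neg_div, sum_div, ← sum_neg_distrib, ← sum_neg_distrib]
        refine sum_congr rfl fun i hi ↦ ?_
        rw [hf i (mem_range.mp hi), fwdDiff]
        field_simp

/-- Duality between the inverse discrete Neumann Laplacian and the inverse discrete
Dirichlet Laplacian.  Here `q j` denotes the Neumann cell value `q_{j-1}` (including
the shadow cells `q_{-1} = q 0` and `q_N = q (N+1)`, with shadow-cell conditions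
`q_N = q_{N-1}` and `q_{-1} = q_1`), `w j` denotes the face value `w_{j-1/2}` with
Dirichlet conditions `w_{-1/2} = w_{N-1/2} = 0`, `f` is a zero-mean source with
`-Δᵢ q = f`, and `-Δ_{i+1/2} w = v` at interior faces.  Then
`Δx Σᵢ v_{i+1/2}·∂_{i+1/2}(Δᵢ⁻¹[f]) = -Δx Σᵢ ∂ᵢ(Δ_{i+1/2}⁻¹[v])·fᵢ`,
where `∂_{i+1/2}(Δᵢ⁻¹[f]) = -∂_{i+1/2}q` and `∂ᵢ(Δ_{i+1/2}⁻¹[v]) = -∂ᵢw`. -/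
theorem discrete_laplacian_duality (N : ℕ) (hN : 1 ≤ N) (Δx : ℝ) (hΔx : 0 < Δx)
    (f v q w : ℕ → ℝ)
    (hfmean : ∑ i ∈ range N, f i = 0)
    (hq : ∀ i < N, -((q i - 2 * q (i + 1) + q (i + 2)) / Δx ^ 2) = f i)
    (hqN : q (N + 1) = q N) (hqm : q 0 = q 2)
    (hw0 : w 0 = 0) (hwN : w N = 0)
    (hw : ∀ j, 1 ≤ j → j ≤ N - 1 →
      -((w (j - 1) - 2 * w j + w (j + 1)) / Δx ^ 2) = v j) :
    Δx * ∑ i ∈ range N, v (i + 1) * (-((q (i + 2) - q (i + 1)) / Δx))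
      = -(Δx * ∑ i ∈ range N, (-((w (i + 1) - w i) / Δx)) * f i) :=
  discrete_laplacian_duality_general N Δx hΔx f v q w hfmean hq hqN hw
end
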